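/- arXiv:2302.05072 — 2 statements merged into one kernel-verified Lean document; each statement's English description precedes it below -/
import Mathlib

section
/- Let A00, A0, A1 be complete subalgebras of a complete Boolean algebra A with A00 ⊆ A0 and A00 ⊆ A1, and assume projections in the diagram (A00; A0, A1; A) are correct, i.e., whenever a0 ∈ A0 and a1 ∈ A1 are nonzero with h_{A00}(a0) = h_{A00}(a1), then a0 ⊓ a1 ≠ ⊥. Then A00 = A0 ∩ A1. -/
/-!
For `a ∈ A0 ∩ A1` put `p = h(a)`. If the part `b = p \ a` of `p` outside `a` were nonzero, then
with `q = h(b) ≤ p` the elements `b ∈ A0` and `q ⊓ a ∈ A1` would both have projection `q`, yet they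
are disjoint, contradicting correctness. Hence `p ≤ a`, so `a = h(a) ∈ A00`.
-/

/-- A complete subalgebra of a complete Boolean algebra `A`: a subset containing `⊥`,
closed under complementation and under suprema of arbitrary subsets. -/
structure CompleteSubalgebra {A : Type*} [CompleteBooleanAlgebra A] (S : Set A) : Prop where
  bot_mem : ⊥ ∈ S
  compl_mem : ∀ a ∈ S, aᶜ ∈ S
  sSup_mem : ∀ T ⊆ S, sSup T ∈ S

/-- The projection onto a complete subalgebra: `h_S(a) = sInf {s ∈ S : a ≤ s}`. -/
def projSub {A : Type*} [CompleteBooleanAlgebra A] (S : Set A) (a : A) : A :=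
  sInf {s | s ∈ S ∧ a ≤ s}

section

variable {A : Type*} [CompleteBooleanAlgebra A] {S : Set A}

namespace CompleteSubalgebra

variable {x y : A}

lemma sup_mem (h : CompleteSubalgebra S) (hx : x ∈ S) (hy : y ∈ S) : x ⊔ y ∈ S := by
  simpa using h.sSup_mem {x, y} (Set.insert_subset hx (Set.singleton_subset_iff.2 hy))

lemma inf_mem (h : CompleteSubalgebra S) (hx : x ∈ S) (hy : y ∈ S) : x ⊓ y ∈ S := by
  simpa using h.compl_mem _ (h.sup_mem (h.compl_mem _ hx) (h.compl_mem _ hy))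

lemma sdiff_mem (h : CompleteSubalgebra S) (hx : x ∈ S) (hy : y ∈ S) : x \ y ∈ S := by
  simpa [sdiff_eq] using h.inf_mem hx (h.compl_mem _ hy)

lemma himp_mem (h : CompleteSubalgebra S) (hx : x ∈ S) (hy : y ∈ S) : x ⇨ y ∈ S := by
  simpa [himp_eq] using h.sup_mem hy (h.compl_mem _ hx)

lemma sInf_mem (h : CompleteSubalgebra S) {T : Set A} (hT : T ⊆ S) : sInf T ∈ S := by
  rw [← compl_compl (sInf T), compl_sInf']
  exact h.compl_mem _ (h.sSup_mem _ (Set.image_subset_iff.2 fun t ht => h.compl_mem t (hT ht)))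

end CompleteSubalgebra

lemma le_projSub (a : A) : a ≤ projSub S a :=
  le_sInf fun _ hs => hs.2

lemma projSub_le {s a : A} (hs : s ∈ S) (hle : a ≤ s) : projSub S a ≤ s :=
  sInf_le ⟨hs, hle⟩

lemma projSub_mem (h : CompleteSubalgebra S) (a : A) : projSub S a ∈ S :=
  h.sInf_mem fun _ hs => hs.1

lemma projSub_eq_bot_iff (hS : ⊥ ∈ S) {a : A} : projSub S a = ⊥ ↔ a = ⊥ :=
  ⟨fun ha => le_bot_iff.1 (ha ▸ le_projSub a), fun ha => le_bot_iff.1 (projSub_le hS ha.le)⟩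

lemma projSub_inf_of_le (h : CompleteSubalgebra S) {c a : A} (hc : c ∈ S)
    (hle : c ≤ projSub S a) : projSub S (c ⊓ a) = c := by
  refine le_antisymm (projSub_le hc inf_le_left) (le_sInf ?_)
  rintro s ⟨hs, hcas⟩
  have : projSub S a ≤ c ⇨ s := projSub_le (h.himp_mem hc hs) (le_himp_iff'.2 hcas)
  exact le_himp_iff_left.1 (hle.trans this)

lemma eq_projSub_of_projSub_le {a : A} (h : projSub S a ≤ a) : a = projSub S a :=
  (le_projSub a).antisymm h

/-- Correctness of projections in the diagram `(A00; A0, A1; A)`. -/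
def ProjectionsCorrect (A00 A0 A1 : Set A) : Prop :=
  ∀ a0 ∈ A0, ∀ a1 ∈ A1, a0 ≠ ⊥ → a1 ≠ ⊥ → projSub A00 a0 = projSub A00 a1 → a0 ⊓ a1 ≠ ⊥

lemma ProjectionsCorrect.projSub_le_self {A00 A0 A1 : Set A} (hc : ProjectionsCorrect A00 A0 A1)
    (h00 : CompleteSubalgebra A00) (h0 : CompleteSubalgebra A0) (h1 : CompleteSubalgebra A1)
    (h00_0 : A00 ⊆ A0) (h00_1 : A00 ⊆ A1) {a : A} (ha0 : a ∈ A0) (ha1 : a ∈ A1) :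
    projSub A00 a ≤ a := by
  set p := projSub A00 a
  rw [← sdiff_eq_bot_iff]
  by_contra hb
  set q := projSub A00 (p \ a)
  have hq : q ∈ A00 := projSub_mem h00 _
  have hqa : projSub A00 (q ⊓ a) = q :=
    projSub_inf_of_le h00 hq (projSub_le (projSub_mem h00 a) sdiff_le)
  have hq_ne : q ≠ ⊥ := (projSub_eq_bot_iff h00.bot_mem).not.2 hb
  refine hc (p \ a) (h0.sdiff_mem (h00_0 (projSub_mem h00 a)) ha0) (q ⊓ a)
    (h1.inf_mem (h00_1 hq) ha1) hb ?_ hqa.symm ?_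
  · exact fun hbot => hq_ne (hqa ▸ (projSub_eq_bot_iff h00.bot_mem).2 hbot)
  · exact (disjoint_sdiff_self_left.mono_right inf_le_right).eq_bot

end

theorem correct_implies_inter {A : Type*} [CompleteBooleanAlgebra A]
    (A00 A0 A1 : Set A)
    (h00 : CompleteSubalgebra A00) (h0 : CompleteSubalgebra A0)
    (h1 : CompleteSubalgebra A1)
    (h00_0 : A00 ⊆ A0) (h00_1 : A00 ⊆ A1)
    (hcorrect : ∀ a0 ∈ A0, ∀ a1 ∈ A1, a0 ≠ ⊥ → a1 ≠ ⊥ →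
      projSub A00 a0 = projSub A00 a1 → a0 ⊓ a1 ≠ ⊥) :
    A00 = A0 ∩ A1 := by
  refine (Set.subset_inter h00_0 h00_1).antisymm fun a ⟨ha0, ha1⟩ => ?_
  have hc : ProjectionsCorrect A00 A0 A1 := hcorrect
  rw [eq_projSub_of_projSub_le (hc.projSub_le_self h00 h0 h1 h00_0 h00_1 ha0 ha1)]
  exact projSub_mem h00 a
end

section
/- (Complete embeddability into the amalgamated limit.) In the setting of a correct system of complete Boolean algebras over a distributive almost-lattice I, fix i0 ∈ I. Then: (a) if p, p' ∈ 𝔸_{i0} are nonzero with p ⊓ p' = ⊥, then no element of D lies ⊑-below both (i0, i0, p, p) and (i0, i0, p', p'); and (b) for every maximal antichain M of 𝔸_{i0} (i.e., M ⊆ 𝔸_{i0} \ {⊥} with m ⊓ m' = ⊥ for distinct m, m' ∈ M and sSup M = ⊤) and every (i, j, p, q) ∈ D, there exist m ∈ M and (i'', j'', p'', q'') ∈ D with (i'', j'', p'', q'') ⊑ (i, j, p, q) and (i'', j'', p'', q'') ⊑ (i0, i0, m, m). (This expresses that each 𝔸_{i0} completely embeds into the amalgamated limit, the completion of (D, ⊑).)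 -/
/-- A distributive almost-lattice: a partial order where any two elements have a meet,
any two elements with a common upper bound have a join, among any three elements two have
a common upper bound, the distributive laws hold whenever both sides exist, and
conditions (v) and (vi) hold. -/
structure DistribAlmostLattice (I : Type*) [PartialOrder I] where
  meet : I → I → I
  join : I → I → I
  /-- (i): `meet i j` is the greatest lower bound of `i` and `j` -/
  meet_isGLB : ∀ i j : I, IsGLB {i, j} (meet i j)
  /-- (ii): if `i`, `j` have a common upper bound, `join i j` is their least upper bound -/
  join_isLUB : ∀ i j : I, (∃ u, i ≤ u ∧ j ≤ u) → IsLUB {i, j} (join i j)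
  /-- (iii): among any three elements, two have a common upper bound -/
  two_of_three : ∀ i j k : I,
    (∃ u, i ≤ u ∧ j ≤ u) ∨ (∃ u, i ≤ u ∧ k ≤ u) ∨ (∃ u, j ≤ u ∧ k ≤ u)
  /-- (iv): distributivity of meet over join (whenever both sides exist) -/
  distrib_meet_join : ∀ i j k : I, (∃ u, j ≤ u ∧ k ≤ u) →
    meet i (join j k) = join (meet i j) (meet i k)
  /-- (iv): distributivity of join over meet (whenever both sides exist) -/
  distrib_join_meet : ∀ i j k : I, (∃ u, i ≤ u ∧ j ≤ u) → (∃ u, i ≤ u ∧ k ≤ u) →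
    join i (meet j k) = meet (join i j) (join i k)
  /-- (v) -/
  cond_v : ∀ i j j' : I, ¬(∃ u, i ≤ u ∧ j ≤ u) →
    ((¬(∃ u, i ≤ u ∧ j' ≤ u) ∧ ¬(∃ u, i ≤ u ∧ meet j j' ≤ u)) ∨
      join i j' = join i (meet j j'))
  /-- (vi) -/
  cond_vi : ∀ i j j' : I, ¬(∃ u, j ≤ u ∧ j' ≤ u) →
    join (meet i j) (meet i j') = i

namespace DistribAlmostLattice

variable {I : Type*} [PartialOrder I] (L : DistribAlmostLattice I)

theorem meet_le_left (i j : I) : L.meet i j ≤ i :=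
  (L.meet_isGLB i j).1 (Set.mem_insert _ _)

theorem meet_le_right (i j : I) : L.meet i j ≤ j :=
  (L.meet_isGLB i j).1 (Set.mem_insert_of_mem _ rfl)

theorem le_join_left (i j : I) (h : ∃ u, i ≤ u ∧ j ≤ u) : i ≤ L.join i j :=
  (L.join_isLUB i j h).1 (Set.mem_insert _ _)

theorem le_join_right (i j : I) (h : ∃ u, i ≤ u ∧ j ≤ u) : j ≤ L.join i j :=
  (L.join_isLUB i j h).1 (Set.mem_insert_of_mem _ rfl)

end DistribAlmostLattice

/-- A subset `F` of a distributive almost-lattice is closed if it is closed under meets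
and under joins whenever they exist. -/
def IsClosedSubset {I : Type*} [PartialOrder I] (L : DistribAlmostLattice I)
    (F : Set I) : Prop :=
  ∀ i ∈ F, ∀ j ∈ F, L.meet i j ∈ F ∧ ((∃ u, i ≤ u ∧ j ≤ u) → L.join i j ∈ F)

section CorrectSystem

variable {I : Type*} [PartialOrder I] (L : DistribAlmostLattice I)
variable (A : I → Type*) [∀ i, CompleteBooleanAlgebra (A i)]
variable (e : ∀ i j : I, i ≤ j → A i → A j)

/-- The projection `h_{ji} : 𝔸_j → 𝔸_i` for `i ≤ j`:
`h_{ji}(a) = sInf {b ∈ 𝔸_i : a ≤ e_{ij}(b)}`. -/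
def sysProj (i j : I) (hij : i ≤ j) (a : A j) : A i :=
  sInf {b : A i | a ≤ e i j hij b}

/-- `(i, j, p, q)` is an amalgamated-limit condition: `p`, `q` are nonzero and they
have the same projection to `𝔸_{i ∧ j}`. -/
def InD {i j : I} (p : A i) (q : A j) : Prop :=
  p ≠ ⊥ ∧ q ≠ ⊥ ∧
    sysProj A e (L.meet i j) i (L.meet_le_left i j) p =
      sysProj A e (L.meet i j) j (L.meet_le_right i j) q

/-- Auxiliary relation: `e_{i'∧i,i}(h_{i',i'∧i}(p')) ≤ p`. -/
def ProjLe {i' i : I} (p' : A i') (p : A i) : Prop :=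
  e (L.meet i' i) i (L.meet_le_right i' i)
    (sysProj A e (L.meet i' i) i' (L.meet_le_left i' i) p') ≤ p

/-- The ordering `⊑` on amalgamated-limit conditions:
`(i', j', p', q') ⊑ (i, j, p, q)`. -/
def Sqle {i j i' j' : I} (p' : A i') (q' : A j') (p : A i) (q : A j) : Prop :=
  (ProjLe L A e p' p ∧ ProjLe L A e q' q) ∨
  (ProjLe L A e q' p ∧ ProjLe L A e p' q) ∨
  (ProjLe L A e p' p ∧ ProjLe L A e p' q) ∨
  (ProjLe L A e q' p ∧ ProjLe L A e q' q)

end CorrectSystem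

/-!
The key identity: for `i, j ≤ u`, `a ∈ 𝔸_i`, `b ∈ 𝔸_j`, the projection of `e a ⊓ e b ∈ 𝔸_u` to
`𝔸_{i ∧ j}` is `h a ⊓ h b` (Frobenius reciprocity `h (x ⊓ e y) = h x ⊓ y` plus correctness).
So `a` and `b` are compatible in `𝔸_u` iff their projections to `𝔸_{i ∧ j}` are.

(a) A condition below both `(i0, i0, p, p)` and `(i0, i0, p', p')` has entries `x`, `y`
(among `p''`, `q''`) whose images in `𝔸_{i0}` lie below `p` and `p'`, hence are disjoint. By the
identity, the projections of `x` and `y` to the meet of their indices with `i0` are disjoint;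
but membership in `D` makes these projections equal, so they vanish, and so does `x`.

(b) Of `i, j, i0` two have an upper bound `u`. Amalgamate in `𝔸_u`, meet with a member `m` of
`M` compatible with the result (one exists since `sSup M = ⊤`), and finally cut both
coordinates down to their common projection, which yields a condition in `D`.
-/

namespace DistribAlmostLattice

variable {I : Type*} [PartialOrder I] (L : DistribAlmostLattice I)

theorem le_meet {x i j : I} (hi : x ≤ i) (hj : x ≤ j) : x ≤ L.meet i j :=
  (L.meet_isGLB i j).2 (by simp [lowerBounds, hi, hj])

theorem join_le {i j u : I} (hi : i ≤ u) (hj : j ≤ u) : L.join i j ≤ u :=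
  (L.join_isLUB i j ⟨u, hi, hj⟩).2 (by simp [upperBounds, hi, hj])

end DistribAlmostLattice

section CompleteEmbedding

variable {α β : Type*} [CompleteBooleanAlgebra α] [CompleteBooleanAlgebra β]

structure IsCompleteEmbedding (f : α → β) : Prop where
  injective : Function.Injective f
  map_top : f ⊤ = ⊤
  map_inf : ∀ a b, f (a ⊓ b) = f a ⊓ f b
  map_sSup : ∀ s, f (sSup s) = sSup (f '' s)

/-- `sysProj A e i j hij` is `embProj (e i j hij)` by definition. -/
def embProj (f : α → β) (b : β) : α :=
  sInf {a | b ≤ f a}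

namespace IsCompleteEmbedding

variable {f : α → β} (hf : IsCompleteEmbedding f)
include hf

def toFrameHom : FrameHom α β where
  toFun := f
  map_inf' := hf.map_inf
  map_top' := hf.map_top
  map_sSup' := hf.map_sSup

theorem monotone : Monotone f :=
  OrderHomClass.mono hf.toFrameHom

theorem map_bot : f ⊥ = ⊥ :=
  BotHomClass.map_bot hf.toFrameHom

theorem map_sup (a a' : α) : f (a ⊔ a') = f a ⊔ f a' :=
  SupHomClass.map_sup hf.toFrameHom a a'

theorem map_compl (a : α) : f aᶜ = (f a)ᶜ :=
  map_compl' hf.toFrameHom a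

theorem map_sInf (s : Set α) : f (sInf s) = sInf (f '' s) := by
  rw [← compl_compl (sInf s), compl_sInf', hf.map_compl, hf.map_sSup, compl_sSup',
    Set.image_image, Set.image_image]
  simp only [hf.map_compl, compl_compl]

theorem gc : GaloisConnection (embProj f) f := fun b a =>
  ⟨fun h => by
    refine le_trans ?_ (hf.monotone h)
    change b ≤ f (sInf _)
    rw [hf.map_sInf]
    exact le_sInf (by simp),
   fun h => sInf_le h⟩

theorem le_iff_le {a a' : α} : f a ≤ f a' ↔ a ≤ a' := by
  rw [← inf_eq_left, ← hf.map_inf, hf.injective.eq_iff, inf_eq_left]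

theorem embProj_map (a : α) : embProj f (f a) = a :=
  le_antisymm (hf.gc.l_u_le a) (hf.le_iff_le.mp (hf.gc.le_u_l _))

theorem map_eq_bot_iff {a : α} : f a = ⊥ ↔ a = ⊥ :=
  hf.injective.eq_iff' hf.map_bot

theorem embProj_eq_bot_iff {b : β} : embProj f b = ⊥ ↔ b = ⊥ := by
  rw [← le_bot_iff, hf.gc.le_iff_le, hf.map_bot, le_bot_iff]

theorem embProj_inf_map (b : β) (a : α) : embProj f (b ⊓ f a) = embProj f b ⊓ a := by
  refine le_antisymm (le_inf (hf.gc.monotone_l inf_le_left) (hf.gc.l_le inf_le_right)) ?_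
  rw [← le_himp_iff, hf.gc.le_iff_le, himp_eq, hf.map_sup, hf.map_compl, ← himp_eq,
    le_himp_iff]
  exact hf.gc.le_u_l _

end IsCompleteEmbedding

end CompleteEmbedding

section EmbeddingSystem

variable {I : Type*} [PartialOrder I] (L : DistribAlmostLattice I)
  (A : I → Type*) [∀ i, CompleteBooleanAlgebra (A i)] (e : ∀ i j : I, i ≤ j → A i → A j)

structure IsEmbeddingSystem : Prop where
  isCompleteEmbedding : ∀ i j : I, ∀ hij : i ≤ j, IsCompleteEmbedding (e i j hij)
  map_map : ∀ i j k : I, ∀ hij : i ≤ j, ∀ hjk : j ≤ k, ∀ a : A i,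
    e j k hjk (e i j hij a) = e i k (hij.trans hjk) a

def IsCorrect : Prop :=
  ∀ i j : I, ∀ hub : ∃ u, i ≤ u ∧ j ≤ u, ∀ a : A i,
    sysProj A e j (L.join i j) (L.le_join_right i j hub)
        (e i (L.join i j) (L.le_join_left i j hub) a) =
      e (L.meet i j) j (L.meet_le_right i j)
        (sysProj A e (L.meet i j) i (L.meet_le_left i j) a)

variable {L A e}

namespace IsEmbeddingSystem

variable (hS : IsEmbeddingSystem A e)
include hS

/-- `e i i` is an injective idempotent, hence the identity. -/
theorem map_self {i : I} (hii : i ≤ i) (a : A i) : e i i hii a = a :=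
  (hS.isCompleteEmbedding i i hii).injective (hS.map_map i i i hii hii a)

theorem gc {i j : I} (hij : i ≤ j) : GaloisConnection (sysProj A e i j hij) (e i j hij) :=
  (hS.isCompleteEmbedding i j hij).gc

theorem sysProj_eq_bot_iff {i j : I} (hij : i ≤ j) {a : A j} :
    sysProj A e i j hij a = ⊥ ↔ a = ⊥ :=
  (hS.isCompleteEmbedding i j hij).embProj_eq_bot_iff

theorem sysProj_inf_map {i j : I} (hij : i ≤ j) (a : A j) (b : A i) :
    sysProj A e i j hij (a ⊓ e i j hij b) = sysProj A e i j hij a ⊓ b :=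
  (hS.isCompleteEmbedding i j hij).embProj_inf_map a b

theorem sysProj_sysProj {i j k : I} (hij : i ≤ j) (hjk : j ≤ k) (a : A k) :
    sysProj A e i j hij (sysProj A e j k hjk a) = sysProj A e i k (hij.trans hjk) a :=
  ((hS.gc hjk).compose (hS.gc hij)).l_unique (hS.gc (hij.trans hjk))
    fun b => hS.map_map i j k hij hjk b

theorem sysProj_map {i j k : I} (hij : i ≤ j) (hjk : j ≤ k) (a : A i) :
    sysProj A e j k hjk (e i k (hij.trans hjk) a) = e i j hij a := by
  rw [← hS.map_map i j k hij hjk]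
  exact (hS.isCompleteEmbedding j k hjk).embProj_map _

theorem sysProj_map_of_isCorrect (hc : IsCorrect L A e) {i j u : I} (hiu : i ≤ u)
    (hju : j ≤ u) (a : A i) :
    sysProj A e j u hju (e i u hiu a) =
      e (L.meet i j) j (L.meet_le_right i j)
        (sysProj A e (L.meet i j) i (L.meet_le_left i j) a) := by
  have hub : ∃ u, i ≤ u ∧ j ≤ u := ⟨u, hiu, hju⟩
  have hku : L.join i j ≤ u := L.join_le hiu hju
  rw [← hS.sysProj_sysProj (L.le_join_right i j hub) hku,
    hS.sysProj_map (L.le_join_left i j hub) hku, hc i j hub]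

theorem sysProj_map_inf_map (hc : IsCorrect L A e) {i j u : I} (hiu : i ≤ u) (hju : j ≤ u)
    (a : A i) (b : A j) :
    sysProj A e (L.meet i j) u ((L.meet_le_right i j).trans hju) (e i u hiu a ⊓ e j u hju b) =
      sysProj A e (L.meet i j) i (L.meet_le_left i j) a ⊓
        sysProj A e (L.meet i j) j (L.meet_le_right i j) b := by
  rw [← hS.sysProj_sysProj (L.meet_le_right i j) hju, hS.sysProj_inf_map,
    hS.sysProj_map_of_isCorrect hc hiu hju, inf_comm _ b, hS.sysProj_inf_map, inf_comm]

theorem map_inf_map_eq_bot_iff (hc : IsCorrect L A e) {i j u : I} (hiu : i ≤ u)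
    (hju : j ≤ u) (a : A i) (b : A j) :
    e i u hiu a ⊓ e j u hju b = ⊥ ↔
      sysProj A e (L.meet i j) i (L.meet_le_left i j) a ⊓
        sysProj A e (L.meet i j) j (L.meet_le_right i j) b = ⊥ := by
  rw [← hS.sysProj_map_inf_map hc hiu hju, hS.sysProj_eq_bot_iff]

end IsEmbeddingSystem

end EmbeddingSystem

theorem exists_mem_inf_ne_bot {α : Type*} [Order.Frame α] {s : Set α} (hs : sSup s = ⊤)
    {a : α} (ha : a ≠ ⊥) : ∃ b ∈ s, a ⊓ b ≠ ⊥ := by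
  by_contra! h
  apply ha
  rw [← inf_top_eq a, ← hs, inf_sSup_eq]
  exact iSup₂_eq_bot.mpr h

section AmalgamatedLimit

variable {I : Type*} [PartialOrder I] {L : DistribAlmostLattice I}
  {A : I → Type*} [∀ i, CompleteBooleanAlgebra (A i)] {e : ∀ i j : I, i ≤ j → A i → A j}

theorem InD.sysProj_eq (hS : IsEmbeddingSystem A e) {i j : I} {p : A i} {q : A j}
    (h : InD L A e p q) {v : I} (hvi : v ≤ i) (hvj : v ≤ j) :
    sysProj A e v i hvi p = sysProj A e v j hvj q := by
  have hv := L.le_meet hvi hvj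
  rw [← hS.sysProj_sysProj hv (L.meet_le_left i j), ← hS.sysProj_sysProj hv (L.meet_le_right i j),
    h.2.2]

theorem InD.symm (hS : IsEmbeddingSystem A e) {i j : I} {p : A i} {q : A j}
    (h : InD L A e p q) : InD L A e q p :=
  ⟨h.2.1, h.1, (h.sysProj_eq hS _ _).symm⟩

theorem Sqle.projLe_or_projLe {i j i' j' : I} {p' : A i'} {q' : A j'} {p : A i} {q : A j}
    (h : Sqle L A e p' q' p q) : ProjLe L A e p' p ∨ ProjLe L A e q' p := by
  rcases h with ⟨h, -⟩ | ⟨h, -⟩ | ⟨h, -⟩ | ⟨h, -⟩ <;> simp [h]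

namespace IsEmbeddingSystem

variable (hS : IsEmbeddingSystem A e)
include hS

theorem exists_inD_le {k k' : I} {x : A k} {y : A k'}
    (h : sysProj A e (L.meet k k') k (L.meet_le_left k k') x ⊓
      sysProj A e (L.meet k k') k' (L.meet_le_right k k') y ≠ ⊥) :
    ∃ x' ≤ x, ∃ y' ≤ y, InD L A e x' y' := by
  set s := sysProj A e (L.meet k k') k (L.meet_le_left k k') x ⊓
    sysProj A e (L.meet k k') k' (L.meet_le_right k k') y
  have hx : sysProj A e _ k (L.meet_le_left k k') (x ⊓ e _ k (L.meet_le_left k k') s) = s := by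
    rw [hS.sysProj_inf_map, inf_eq_right.mpr inf_le_left]
  have hy : sysProj A e _ k' (L.meet_le_right k k') (y ⊓ e _ k' (L.meet_le_right k k') s) = s := by
    rw [hS.sysProj_inf_map, inf_eq_right.mpr inf_le_right]
  refine ⟨_, inf_le_left, _, inf_le_left, ?_, ?_, hx.trans hy.symm⟩
  · exact (hS.sysProj_eq_bot_iff _).not.mp (by rwa [hx])
  · exact (hS.sysProj_eq_bot_iff _).not.mp (by rwa [hy])

theorem projLe_of_le_map {i k : I} (hik : i ≤ k) {x : A k} {p : A i}
    (h : x ≤ e i k hik p) : ProjLe L A e x p := by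
  have key : ∀ v (_ : L.meet k i = v) (hvk : v ≤ k) (hvi : v ≤ i),
      e v i hvi (sysProj A e v k hvk x) ≤ p → ProjLe L A e x p := by
    rintro v rfl _ _ hle
    exact hle
  refine key i (le_antisymm (L.meet_le_right k i) (L.le_meet hik le_rfl)) hik le_rfl ?_
  rw [hS.map_self]
  exact (hS.gc hik).l_le h

theorem projLe_of_le {i : I} {x p : A i} (h : x ≤ p) : ProjLe L A e x p :=
  hS.projLe_of_le_map le_rfl (by rwa [hS.map_self])

theorem eq_bot_of_projLe_of_disjoint (hc : IsCorrect L A e) {i0 k k' : I} {p p' : A i0}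
    {x : A k} {y : A k'}
    (hxy : ∀ v (hvk : v ≤ k) (hvk' : v ≤ k'), sysProj A e v k hvk x = sysProj A e v k' hvk' y)
    (hp : ProjLe L A e x p) (hp' : ProjLe L A e y p') (hpp' : p ⊓ p' = ⊥) : x = ⊥ := by
  have hbot := (hS.map_inf_map_eq_bot_iff hc (L.meet_le_right k i0) (L.meet_le_right k' i0) _ _).mp
    (le_bot_iff.mp (hpp' ▸ inf_le_inf hp hp'))
  rwa [hS.sysProj_sysProj, hS.sysProj_sysProj,
    ← hxy _ ((L.meet_le_left _ _).trans (L.meet_le_left k i0)), inf_idem,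
    hS.sysProj_eq_bot_iff] at hbot

theorem exists_inD_of_le_of_le (hc : IsCorrect L A e) {i j u i0 : I} {M : Set (A i0)}
    (hM : sSup M = ⊤) (hiu : i ≤ u) (hju : j ≤ u) {p : A i} {q : A j} (hpq : InD L A e p q) :
    ∃ m ∈ M, ∃ (p'' : A u) (q'' : A i0), InD L A e p'' q'' ∧
      ProjLe L A e p'' p ∧ ProjLe L A e p'' q ∧ ProjLe L A e q'' m := by
  set c := e i u hiu p ⊓ e j u hju q
  have hc0 : c ≠ ⊥ := by
    rw [Ne, hS.map_inf_map_eq_bot_iff hc hiu hju, ← hpq.2.2, inf_idem, hS.sysProj_eq_bot_iff]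
    exact hpq.1
  have hlu := L.meet_le_left u i0
  have hli0 := L.meet_le_right u i0
  obtain ⟨m, hmM, hm⟩ := exists_mem_inf_ne_bot hM
    (a := e _ i0 hli0 (sysProj A e _ u hlu c))
    (by rwa [Ne, (hS.isCompleteEmbedding _ _ hli0).map_eq_bot_iff, hS.sysProj_eq_bot_iff])
  obtain ⟨p'', hp'', q'', hq'', hD⟩ := hS.exists_inD_le (x := c) (y := m) (by
    rwa [inf_comm, ← hS.sysProj_inf_map, inf_comm, ne_eq, hS.sysProj_eq_bot_iff])
  exact ⟨m, hmM, p'', q'', hD, hS.projLe_of_le_map hiu (hp''.trans inf_le_left),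
    hS.projLe_of_le_map hju (hp''.trans inf_le_right), hS.projLe_of_le hq''⟩

theorem exists_inD_of_le_of_i0_le (hc : IsCorrect L A e) {i j u i0 : I} {M : Set (A i0)}
    (hM : sSup M = ⊤) (hiu : i ≤ u) (hu : i0 ≤ u) {p : A i} {q : A j} (hpq : InD L A e p q) :
    ∃ m ∈ M, ∃ (p'' : A u) (q'' : A j), InD L A e p'' q'' ∧
      ProjLe L A e p'' p ∧ ProjLe L A e q'' q ∧ ProjLe L A e p'' m := by
  have hlu := L.meet_le_left u j
  have hlj := L.meet_le_right u j
  have ht : e i u hiu p ⊓ e _ u hlu (sysProj A e _ j hlj q) ≠ ⊥ := by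
    rw [Ne, hS.map_inf_map_eq_bot_iff hc, hS.sysProj_sysProj,
      ← hpq.sysProj_eq hS (L.meet_le_left i _) ((L.meet_le_right i _).trans hlj), inf_idem,
      hS.sysProj_eq_bot_iff]
    exact hpq.1
  have hu_emb := hS.isCompleteEmbedding _ _ hu
  obtain ⟨_, ⟨m, hmM, rfl⟩, hm⟩ := exists_mem_inf_ne_bot (s := e i0 u hu '' M)
    (by rw [← hu_emb.map_sSup, hM, hu_emb.map_top]) ht
  obtain ⟨p'', hp'', q'', hq'', hD⟩ :=
    hS.exists_inD_le (x := e i u hiu p ⊓ e i0 u hu m) (y := q) (by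
      rwa [← hS.sysProj_inf_map, ne_eq, hS.sysProj_eq_bot_iff, inf_right_comm])
  exact ⟨m, hmM, p'', q'', hD, hS.projLe_of_le_map hiu (hp''.trans inf_le_left),
    hS.projLe_of_le hq'', hS.projLe_of_le_map hu (hp''.trans inf_le_right)⟩

end IsEmbeddingSystem

end AmalgamatedLimit

theorem complete_embedding_into_amalgamated_limit_general
    {I : Type*} [PartialOrder I] (L : DistribAlmostLattice I)
    (A : I → Type*) [∀ i, CompleteBooleanAlgebra (A i)]
    (e : ∀ i j : I, i ≤ j → A i → A j)
    -- the `e i j` are complete embeddings forming a commuting system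
    (he_inj : ∀ i j : I, ∀ hij : i ≤ j, Function.Injective (e i j hij))
    (he_top : ∀ i j : I, ∀ hij : i ≤ j, e i j hij ⊤ = ⊤)
    (he_inf : ∀ i j : I, ∀ hij : i ≤ j, ∀ a b : A i,
      e i j hij (a ⊓ b) = e i j hij a ⊓ e i j hij b)
    (he_sSup : ∀ i j : I, ∀ hij : i ≤ j, ∀ S : Set (A i),
      e i j hij (sSup S) = sSup (e i j hij '' S))
    (he_comp : ∀ i j k : I, ∀ hij : i ≤ j, ∀ hjk : j ≤ k, ∀ a : A i,
      e j k hjk (e i j hij a) = e i k (hij.trans hjk) a)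
    -- correctness: `h_{i∨j,j}(e_{i,i∨j}(a)) = e_{i∧j,j}(h_{i,i∧j}(a))`
    (hcorrect : ∀ i j : I, ∀ hub : ∃ u, i ≤ u ∧ j ≤ u, ∀ a : A i,
      sysProj A e j (L.join i j) (L.le_join_right i j hub)
          (e i (L.join i j) (L.le_join_left i j hub) a) =
        e (L.meet i j) j (L.meet_le_right i j)
          (sysProj A e (L.meet i j) i (L.meet_le_left i j) a))
    (i0 : I) :
    -- (a) incompatibility is preserved
    (∀ p p' : A i0, p ≠ ⊥ → p' ≠ ⊥ → p ⊓ p' = ⊥ →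
      ¬ ∃ (i'' j'' : I) (p'' : A i'') (q'' : A j''),
        InD L A e p'' q'' ∧ Sqle L A e p'' q'' p p ∧ Sqle L A e p'' q'' p' p') ∧
    -- (b) maximal antichains of `𝔸_{i0}` remain predense
    (∀ M : Set (A i0),
      (∀ m ∈ M, m ≠ ⊥) →
      (∀ m ∈ M, ∀ m' ∈ M, m ≠ m' → m ⊓ m' = ⊥) →
      sSup M = ⊤ →
      ∀ i j : I, ∀ p : A i, ∀ q : A j, InD L A e p q →
        ∃ m ∈ M, ∃ (i'' j'' : I) (p'' : A i'') (q'' : A j''),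
          InD L A e p'' q'' ∧ Sqle L A e p'' q'' p q ∧
            Sqle L A e p'' q'' m m) := by
  have hS : IsEmbeddingSystem A e :=
    ⟨fun i j hij => ⟨he_inj i j hij, he_top i j hij, he_inf i j hij, he_sSup i j hij⟩, he_comp⟩
  refine ⟨?_, ?_⟩
  · rintro p p' - - hpp' ⟨i'', j'', p'', q'', hD, hle, hle'⟩
    rcases hle.projLe_or_projLe with h | h <;> rcases hle'.projLe_or_projLe with h' | h'
    · exact hD.1 (hS.eq_bot_of_projLe_of_disjoint hcorrect (fun _ _ _ => rfl) h h' hpp')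
    · exact hD.1 (hS.eq_bot_of_projLe_of_disjoint hcorrect (fun _ => hD.sysProj_eq hS) h h' hpp')
    · exact hD.2.1 (hS.eq_bot_of_projLe_of_disjoint hcorrect
        (fun _ hvj hvi => (hD.sysProj_eq hS hvi hvj).symm) h h' hpp')
    · exact hD.2.1 (hS.eq_bot_of_projLe_of_disjoint hcorrect (fun _ _ _ => rfl) h h' hpp')
  · rintro M - - hM i j p q hpq
    rcases L.two_of_three i j i0 with ⟨u, hiu, hju⟩ | ⟨u, hiu, hu⟩ | ⟨u, hju, hu⟩
    · obtain ⟨m, hm, p'', q'', hD, hp, hq, hqm⟩ := hS.exists_inD_of_le_of_le hcorrect hM hiu hju hpq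
      exact ⟨m, hm, u, i0, p'', q'', hD, .inr (.inr (.inl ⟨hp, hq⟩)), .inr (.inr (.inr ⟨hqm, hqm⟩))⟩
    · obtain ⟨m, hm, p'', q'', hD, hp, hq, hpm⟩ :=
        hS.exists_inD_of_le_of_i0_le hcorrect hM hiu hu hpq
      exact ⟨m, hm, u, j, p'', q'', hD, .inl ⟨hp, hq⟩, .inr (.inr (.inl ⟨hpm, hpm⟩))⟩
    · obtain ⟨m, hm, p'', q'', hD, hq, hp, hpm⟩ :=
        hS.exists_inD_of_le_of_i0_le hcorrect hM hju hu (hpq.symm hS)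
      exact ⟨m, hm, u, i, p'', q'', hD, .inr (.inl ⟨hp, hq⟩), .inr (.inr (.inl ⟨hpm, hpm⟩))⟩

/-- Complete embeddability into the amalgamated limit: (a) incompatible elements of
`𝔸_{i0}` stay incompatible in `(D, ⊑)`, and (b) maximal antichains of `𝔸_{i0}` remain
predense in `(D, ⊑)`. -/
theorem complete_embedding_into_amalgamated_limit
    {I : Type*} [PartialOrder I] (L : DistribAlmostLattice I)
    (A : I → Type*) [∀ i, CompleteBooleanAlgebra (A i)]
    (e : ∀ i j : I, i ≤ j → A i → A j)
    -- the `e i j` are complete embeddings forming a commuting system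
    (he_inj : ∀ i j : I, ∀ hij : i ≤ j, Function.Injective (e i j hij))
    (he_bot : ∀ i j : I, ∀ hij : i ≤ j, e i j hij ⊥ = ⊥)
    (he_top : ∀ i j : I, ∀ hij : i ≤ j, e i j hij ⊤ = ⊤)
    (he_inf : ∀ i j : I, ∀ hij : i ≤ j, ∀ a b : A i,
      e i j hij (a ⊓ b) = e i j hij a ⊓ e i j hij b)
    (he_sup : ∀ i j : I, ∀ hij : i ≤ j, ∀ a b : A i,
      e i j hij (a ⊔ b) = e i j hij a ⊔ e i j hij b)
    (he_sSup : ∀ i j : I, ∀ hij : i ≤ j, ∀ S : Set (A i),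
      e i j hij (sSup S) = sSup (e i j hij '' S))
    (he_id : ∀ i : I, ∀ hii : i ≤ i, ∀ a : A i, e i i hii a = a)
    (he_comp : ∀ i j k : I, ∀ hij : i ≤ j, ∀ hjk : j ≤ k, ∀ a : A i,
      e j k hjk (e i j hij a) = e i k (hij.trans hjk) a)
    -- correctness: `h_{i∨j,j}(e_{i,i∨j}(a)) = e_{i∧j,j}(h_{i,i∧j}(a))`
    (hcorrect : ∀ i j : I, ∀ hub : ∃ u, i ≤ u ∧ j ≤ u, ∀ a : A i,
      sysProj A e j (L.join i j) (L.le_join_right i j hub)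
          (e i (L.join i j) (L.le_join_left i j hub) a) =
        e (L.meet i j) j (L.meet_le_right i j)
          (sysProj A e (L.meet i j) i (L.meet_le_left i j) a))
    (i0 : I) :
    -- (a) incompatibility is preserved
    (∀ p p' : A i0, p ≠ ⊥ → p' ≠ ⊥ → p ⊓ p' = ⊥ →
      ¬ ∃ (i'' j'' : I) (p'' : A i'') (q'' : A j''),
        InD L A e p'' q'' ∧ Sqle L A e p'' q'' p p ∧ Sqle L A e p'' q'' p' p') ∧
    -- (b) maximal antichains of `𝔸_{i0}` remain predense
    (∀ M : Set (A i0),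
      (∀ m ∈ M, m ≠ ⊥) →
      (∀ m ∈ M, ∀ m' ∈ M, m ≠ m' → m ⊓ m' = ⊥) →
      sSup M = ⊤ →
      ∀ i j : I, ∀ p : A i, ∀ q : A j, InD L A e p q →
        ∃ m ∈ M, ∃ (i'' j'' : I) (p'' : A i'') (q'' : A j''),
          InD L A e p'' q'' ∧ Sqle L A e p'' q'' p q ∧
            Sqle L A e p'' q'' m m) :=
  complete_embedding_into_amalgamated_limit_general L A e he_inj he_top he_inf he_sSup he_comp
    hcorrect i0
end
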